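/- arXiv:1810.06335 — 2 statements merged into one kernel-verified Lean document; each statement's English description precedes it below -/
import Mathlib

section
/- In the independent lognormal futures model, for every initial temperature index price y > 0 the map y ↦ ∫∫ g(F^E(x,u))·h(F^I(y,v)) dμ(u,v) is differentiable at y, and its derivative (the temperature delta Δ_I) is given by Δ_I = ∫∫ g(F^E(x,u))·h(F^I(y,v)) · v/(y·σ_I·T) dμ(u,v), i.e. the Malliavin weight is π^{Δ_I}(v) = v/(y σ_I T). -/
/-!
Write `y' = y · exp (σ_I s)`: the change of `y` is absorbed by the shift `v ↦ v + s` of the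
Gaussian variable, and the Cameron–Martin formula
`∫ f (v + s) dγ_T = ∫ f v · exp (s v / T - s² / (2T)) dγ_T` moves `s` into a density that can be
differentiated under the integral sign; the domination comes from the exponential moments of
`γ_T`, which are finite, since `h` has polynomial growth. At `s = 0` the density contributes the
weight `v / T` and `ds/dy = 1 / (y σ_I)`. The `u`-factor is a constant and splits off by Fubini.
-/

open MeasureTheory ProbabilityTheory Real Filter
open scoped NNReal

namespace ProbabilityTheory

variable {μ : ℝ} {V : ℝ≥0}

lemma integrable_exp_mul_abs_gaussianReal (a : ℝ) :
    Integrable (fun v ↦ exp (a * |v|)) (gaussianReal μ V) :=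
  integrable_exp_mul_abs (X := id) (integrable_exp_mul_gaussianReal a)
    (integrable_exp_mul_gaussianReal (-a))

lemma integrable_gaussianReal_of_abs_le_exp {K a : ℝ} {f : ℝ → ℝ}
    (hf : AEStronglyMeasurable f (gaussianReal μ V)) (hfb : ∀ v, |f v| ≤ K * exp (a * |v|)) :
    Integrable f (gaussianReal μ V) :=
  ((integrable_exp_mul_abs_gaussianReal a).const_mul K).mono' hf (ae_of_all _ hfb)

/-- The density of `gaussianReal t V` with respect to `gaussianReal 0 V`. -/
noncomputable def cameronMartinDensity (V : ℝ≥0) (t v : ℝ) : ℝ :=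
  exp (t * v / V - t ^ 2 / (2 * V))

lemma gaussianPDFReal_eq_mul_cameronMartinDensity (t : ℝ) (V : ℝ≥0) (v : ℝ) :
    gaussianPDFReal t V v = gaussianPDFReal 0 V v * cameronMartinDensity V t v := by
  simp only [gaussianPDFReal, cameronMartinDensity, mul_assoc, ← exp_add]
  ring_nf

lemma integral_comp_add_gaussianReal (hV : V ≠ 0) (f : ℝ → ℝ) (t : ℝ) :
    ∫ v, f (v + t) ∂gaussianReal 0 V = ∫ v, f v * cameronMartinDensity V t v ∂gaussianReal 0 V := by
  rw [← (measurableEmbedding_addRight t).integral_map, gaussianReal_map_add_const, zero_add,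
    integral_gaussianReal_eq_integral_smul hV, integral_gaussianReal_eq_integral_smul hV]
  simp only [smul_eq_mul, gaussianPDFReal_eq_mul_cameronMartinDensity t]
  congr 1 with v
  ring

lemma cameronMartinDensity_pos (V : ℝ≥0) (t v : ℝ) : 0 < cameronMartinDensity V t v :=
  exp_pos _

lemma hasDerivAt_cameronMartinDensity (V : ℝ≥0) (t v : ℝ) :
    HasDerivAt (cameronMartinDensity V · v) ((v - t) / V * cameronMartinDensity V t v) t := by
  have hexponent : HasDerivAt (fun s : ℝ ↦ s * v / V - s ^ 2 / (2 * V)) ((v - t) / V) t := by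
    refine ((((hasDerivAt_id' t).mul_const v).div_const (V : ℝ)).fun_sub
      ((hasDerivAt_pow 2 t).div_const (2 * (V : ℝ)))).congr_deriv ?_
    norm_num
    ring
  simpa [cameronMartinDensity, mul_comm] using hexponent.exp

lemma cameronMartinDensity_le_exp_abs {t : ℝ} (ht : |t| ≤ 1) (v : ℝ) :
    cameronMartinDensity V t v ≤ exp (|v| / V) := by
  have htv : t * v ≤ |v| :=
    (le_abs_self _).trans (by rw [abs_mul]; exact mul_le_of_le_one_left (abs_nonneg v) ht)
  refine exp_le_exp.2 ((sub_le_self _ (by positivity)).trans ?_)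
  exact div_le_div_of_nonneg_right htv V.coe_nonneg

theorem hasDerivAt_integral_comp_add_gaussianReal (hV : V ≠ 0) {K a : ℝ} {f : ℝ → ℝ}
    (hf : AEStronglyMeasurable f (gaussianReal 0 V)) (hfb : ∀ v, |f v| ≤ K * exp (a * |v|)) :
    HasDerivAt (fun t ↦ ∫ v, f (v + t) ∂gaussianReal 0 V)
      (∫ v, f v * (v / V) ∂gaussianReal 0 V) 0 := by
  have hV₀ : (0 : ℝ) < V := by positivity
  have hK : 0 ≤ K := nonneg_of_mul_nonneg_left ((abs_nonneg _).trans (hfb 0)) (exp_pos _)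
  have hbound : ∀ v, ∀ t ∈ Metric.ball (0 : ℝ) 1,
      ‖f v * ((v - t) / V * cameronMartinDensity V t v)‖
        ≤ K / V * exp ((a + 1 + 1 / V) * |v|) := by
    intro v t ht
    rw [mem_ball_zero_iff, Real.norm_eq_abs] at ht
    have hweight : |(v - t) / V| ≤ exp |v| / V := by
      rw [abs_div, abs_of_pos hV₀]
      gcongr
      calc |v - t| ≤ |v| + 1 := (abs_sub _ _).trans (by linarith)
        _ ≤ exp |v| := add_one_le_exp _
    rw [Real.norm_eq_abs, abs_mul, abs_mul, abs_of_pos (cameronMartinDensity_pos V t v)]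
    calc |f v| * (|(v - t) / V| * cameronMartinDensity V t v)
        ≤ K * exp (a * |v|) * (exp |v| / V * exp (|v| / V)) := by
          have hρ := cameronMartinDensity_pos V t v
          gcongr
          exacts [hfb v, cameronMartinDensity_le_exp_abs ht.le v]
      _ = K / V * exp ((a + 1 + 1 / V) * |v|) := by
          rw [div_mul_eq_mul_div, mul_div_assoc', ← exp_add, mul_assoc, ← exp_add]
          ring_nf
  have hderiv := hasDerivAt_integral_of_dominated_loc_of_deriv_le
    (F := fun t v ↦ f v * cameronMartinDensity V t v)
    (F' := fun t v ↦ f v * ((v - t) / V * cameronMartinDensity V t v))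
    (Metric.ball_mem_nhds 0 one_pos)
    (Eventually.of_forall fun t ↦ hf.mul (by unfold cameronMartinDensity; fun_prop))
    (integrable_gaussianReal_of_abs_le_exp (hf.mul (by unfold cameronMartinDensity; fun_prop))
      (by simpa [cameronMartinDensity] using hfb))
    (hf.mul (by unfold cameronMartinDensity; fun_prop))
    (ae_of_all _ hbound)
    ((integrable_exp_mul_abs_gaussianReal _).const_mul _)
    (ae_of_all _ fun v t _ ↦ (hasDerivAt_cameronMartinDensity V t v).const_mul (f v))
  simp_rw [integral_comp_add_gaussianReal hV]
  simpa [cameronMartinDensity] using hderiv.2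

lemma abs_comp_mul_exp_le {h : ℝ → ℝ} {C : ℝ} {p : ℕ} (hhb : ∀ z, |h z| ≤ C * (1 + |z|) ^ p)
    (y σ c v : ℝ) :
    |h (y * exp (σ * v - c))| ≤ C * (1 + |y|) ^ p * exp (p * |c|) * exp (p * |σ| * |v|) := by
  have hC : 0 ≤ C := by simpa using (abs_nonneg _).trans (hhb 0)
  have hexp : exp (σ * v - c) ≤ exp (|σ| * |v| + |c|) := by
    gcongr
    rw [← abs_mul]
    linarith [le_abs_self (σ * v), neg_abs_le c]
  have hbase : 1 + |y * exp (σ * v - c)| ≤ (1 + |y|) * exp (|σ| * |v| + |c|) := by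
    rw [abs_mul, abs_of_pos (exp_pos _)]
    nlinarith [one_le_exp (by positivity : 0 ≤ |σ| * |v| + |c|), abs_nonneg y]
  calc |h (y * exp (σ * v - c))| ≤ C * ((1 + |y|) * exp (|σ| * |v| + |c|)) ^ p := by
        refine (hhb _).trans ?_
        gcongr
    _ = C * (1 + |y|) ^ p * exp (p * |c|) * exp (p * |σ| * |v|) := by
        rw [mul_pow, ← exp_nat_mul, mul_add, exp_add]
        ring_nf

theorem hasDerivAt_integral_comp_mul_exp_gaussianReal (hV : V ≠ 0) {h : ℝ → ℝ} {C : ℝ} {p : ℕ}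
    (hh : Measurable h) (hhb : ∀ z, |h z| ≤ C * (1 + |z|) ^ p) {σ : ℝ} (hσ : σ ≠ 0) (c : ℝ)
    {y : ℝ} (hy : 0 < y) :
    HasDerivAt (fun y' ↦ ∫ v, h (y' * exp (σ * v - c)) ∂gaussianReal 0 V)
      (∫ v, h (y * exp (σ * v - c)) * (v / (y * σ * V)) ∂gaussianReal 0 V) y := by
  set f : ℝ → ℝ := fun v ↦ h (y * exp (σ * v - c))
  have hf : Measurable f := hh.comp (by fun_prop)
  have hshift : HasDerivAt (fun y' ↦ (log y' - log y) / σ) (y⁻¹ / σ) y :=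
    ((hasDerivAt_log hy.ne').sub_const _).div_const σ
  have hcomp := (hasDerivAt_integral_comp_add_gaussianReal hV hf.aestronglyMeasurable
    (abs_comp_mul_exp_le hhb y σ c)).comp_of_eq y hshift (by simp)
  have hrepar : (fun y' ↦ ∫ v, h (y' * exp (σ * v - c)) ∂gaussianReal 0 V)
      =ᶠ[nhds y] (fun t ↦ ∫ v, f (v + t) ∂gaussianReal 0 V) ∘ fun y' ↦ (log y' - log y) / σ := by
    filter_upwards [eventually_gt_nhds hy] with y' hy'
    refine integral_congr_ae (ae_of_all _ fun v ↦ congrArg h ?_)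
    rw [mul_add, mul_div_cancel₀ _ hσ, add_comm, add_sub_assoc, exp_add, ← mul_assoc,
      exp_sub (log y'), exp_log hy, exp_log hy', mul_div_cancel₀ _ hy.ne']
  refine (hcomp.congr_of_eventuallyEq hrepar).congr_deriv ?_
  rw [← integral_mul_const]
  congr 1 with v
  simp only [f]
  field_simp

end ProbabilityTheory

theorem temperature_delta_independent_general
    (T σE σI : ℝ) (hT : 0 < T) (hσI : 0 < σI)
    (g h : ℝ → ℝ) (hh : Measurable h)
    (C : ℝ) (p : ℕ)
    (hhb : ∀ z : ℝ, |h z| ≤ C * (1 + |z|) ^ p)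
    (x y : ℝ) (hy : 0 < y) :
    HasDerivAt
      (fun y' : ℝ =>
        ∫ w : ℝ × ℝ,
          g (x * Real.exp (σE * w.1 - σE ^ 2 * T / 2)) *
            h (y' * Real.exp (σI * w.2 - σI ^ 2 * T / 2))
          ∂((gaussianReal 0 T.toNNReal).prod (gaussianReal 0 T.toNNReal)))
      (∫ w : ℝ × ℝ,
          g (x * Real.exp (σE * w.1 - σE ^ 2 * T / 2)) *
            h (y * Real.exp (σI * w.2 - σI ^ 2 * T / 2)) *
            (w.2 / (y * σI * T))
        ∂((gaussianReal 0 T.toNNReal).prod (gaussianReal 0 T.toNNReal)))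
      y := by
  have hV : T.toNNReal ≠ 0 := by simpa using hT
  set G : ℝ → ℝ := fun u ↦ g (x * exp (σE * u - σE ^ 2 * T / 2))
  have hI := (hasDerivAt_integral_comp_mul_exp_gaussianReal hV hh hhb hσI.ne' (σI ^ 2 * T / 2)
    hy).const_mul (∫ u, G u ∂gaussianReal 0 T.toNNReal)
  rw [Real.coe_toNNReal T hT.le] at hI
  refine (hI.congr_of_eventuallyEq
    (Eventually.of_forall fun y' ↦ integral_prod_mul G _)).congr_deriv ?_
  rw [← integral_prod_mul G]
  simp only [G, mul_assoc]

/-- **Temperature delta in the independent lognormal futures model.**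
For every initial temperature index price `y > 0`, the quanto option price
`y ↦ ∫∫ g(Fᴱ(x,u)) h(Fᴵ(y,v)) dμ(u,v)` is differentiable at `y` and its derivative is
given by the Malliavin-weight formula with weight `π = v / (y σ_I T)`. -/
theorem temperature_delta_independent
    (T σE σI : ℝ) (hT : 0 < T) (hσE : 0 < σE) (hσI : 0 < σI)
    (g h : ℝ → ℝ) (hg : Measurable g) (hh : Measurable h)
    (C : ℝ) (p : ℕ) (hC : 0 ≤ C)
    (hgb : ∀ z : ℝ, |g z| ≤ C * (1 + |z|) ^ p)
    (hhb : ∀ z : ℝ, |h z| ≤ C * (1 + |z|) ^ p)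
    (x y : ℝ) (hx : 0 < x) (hy : 0 < y) :
    HasDerivAt
      (fun y' : ℝ =>
        ∫ w : ℝ × ℝ,
          g (x * Real.exp (σE * w.1 - σE ^ 2 * T / 2)) *
            h (y' * Real.exp (σI * w.2 - σI ^ 2 * T / 2))
          ∂((gaussianReal 0 T.toNNReal).prod (gaussianReal 0 T.toNNReal)))
      (∫ w : ℝ × ℝ,
          g (x * Real.exp (σE * w.1 - σE ^ 2 * T / 2)) *
            h (y * Real.exp (σI * w.2 - σI ^ 2 * T / 2)) *
            (w.2 / (y * σI * T))
        ∂((gaussianReal 0 T.toNNReal).prod (gaussianReal 0 T.toNNReal)))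
      y :=
  temperature_delta_independent_general T σE σI hT hσI g h hh C p hhb x y hy
end

section
/- Energy delta of the product call quanto option (payoff of Eq. (9)): in the independent lognormal futures model, for strikes K_E, K_I ∈ ℝ the map x ↦ ∫∫ max(F^E(x,u) − K_E, 0)·max(F^I(y,v) − K_I, 0) dμ(u,v) is differentiable at every x > 0, with derivative Δ_E = ∫∫ max(F^E(x,u) − K_E, 0)·max(F^I(y,v) − K_I, 0) · u/(x·σ_E·T) dμ(u,v). In particular the Malliavin-weight representation of the delta holds even though the call payoff x ↦ max(x − K_E, 0) is not differentiable. -/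
/-!
By independence the price factorises as `P_E(x) · P_I(y)`, so it suffices to differentiate the
one-dimensional call price `P_E(x) = ∫ max(x e^{σu - c} - K, 0) dγ_T(u)`. Differentiating under
the integral sign (the payoff is Lipschitz in `x` and has a kink only on a `γ_T`-null set) gives
`P_E'(x) = ∫ 1{x e^{σu - c} > K} e^{σu - c} dγ_T`. Gaussian integration by parts (Stein's lemma
`∫ u g(u) dγ_T = T ∫ g' dγ_T`, valid for `g` continuous with one kink) applied to the payoff
`g(u) = max(x e^{σu - c} - K, 0)` turns this into the Malliavin-weight form
`∫ g(u) · u / (x σ T) dγ_T`.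
-/

open MeasureTheory ProbabilityTheory
open Real Filter Topology Set
open scoped NNReal

theorem HasDerivAt.max_zero_of_ne_zero {f : ℝ → ℝ} {f' x : ℝ} (hf : HasDerivAt f f' x)
    (hx : f x ≠ 0) : HasDerivAt (fun t => max (f t) 0) (if 0 < f x then f' else 0) x := by
  rcases hx.lt_or_gt with hneg | hpos
  · rw [if_neg hneg.not_gt]
    refine (hasDerivAt_const x 0).congr_of_eventuallyEq ?_
    filter_upwards [hf.continuousAt.eventually (gt_mem_nhds hneg)] with t ht
    exact max_eq_right ht.le
  · rw [if_pos hpos]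
    refine hf.congr_of_eventuallyEq ?_
    filter_upwards [hf.continuousAt.eventually (lt_mem_nhds hpos)] with t ht
    exact max_eq_left ht.le

theorem Function.Injective.exists_forall_ne_apply_ne {α β : Type*} [Nonempty α] {φ : α → β}
    (hφ : Function.Injective φ) (b : β) : ∃ a, ∀ u ≠ a, φ u ≠ b := by
  by_cases h : ∃ a, φ a = b
  · obtain ⟨a, rfl⟩ := h
    exact ⟨a, fun u hu hua => hu (hφ hua)⟩
  · exact ⟨Classical.arbitrary α, fun u _ => not_exists.mp h u⟩

theorem integral_eq_zero_of_hasDerivAt_off_of_integrable {E : Type*} [NormedAddCommGroup E]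
    [NormedSpace ℝ E] [CompleteSpace E] {f f' : ℝ → E} {a : ℝ} (hcont : ContinuousAt f a)
    (hderiv : ∀ x ≠ a, HasDerivAt f (f' x) x) (hf' : Integrable f') (hf : Integrable f) :
    ∫ x, f' x = 0 := by
  have hbot : Tendsto f atBot (𝓝 0) :=
    tendsto_zero_of_hasDerivAt_of_integrableOn_Iic (a := a - 1)
      (fun x hx => hderiv x (by linarith [hx.out])) hf'.integrableOn hf.integrableOn
  have htop : Tendsto f atTop (𝓝 0) :=
    tendsto_zero_of_hasDerivAt_of_integrableOn_Ioi (fun x hx => hderiv x hx.out.ne')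
      hf'.integrableOn hf.integrableOn
  rw [← intervalIntegral.integral_Iic_add_Ioi (b := a) hf'.integrableOn hf'.integrableOn,
    integral_Iic_of_hasDerivAt_of_tendsto hcont.continuousWithinAt
      (fun x hx => hderiv x hx.out.ne) hf'.integrableOn hbot,
    integral_Ioi_of_hasDerivAt_of_tendsto hcont.continuousWithinAt
      (fun x hx => hderiv x hx.out.ne') hf'.integrableOn htop]
  abel

theorem hasDerivAt_gaussianPDFReal (μ : ℝ) (v : ℝ≥0) (x : ℝ) :
    HasDerivAt (gaussianPDFReal μ v) (-((x - μ) / v) * gaussianPDFReal μ v x) x := by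
  have h := ((((hasDerivAt_id x).sub_const μ).pow 2).neg.div_const (2 * (v : ℝ))).exp.const_mul
    (√(2 * π * v))⁻¹
  refine h.congr_deriv ?_
  simp only [gaussianPDFReal, id, Pi.pow_apply, Pi.neg_apply]
  ring

theorem integrable_gaussianReal_iff {E : Type*} [NormedAddCommGroup E] [NormedSpace ℝ E]
    {μ : ℝ} {v : ℝ≥0} (hv : v ≠ 0) {g : ℝ → E} :
    Integrable g (gaussianReal μ v) ↔ Integrable (fun x => gaussianPDFReal μ v x • g x) := by
  rw [gaussianReal_of_var_ne_zero μ hv, integrable_withDensity_iff_integrable_smul'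
    (measurable_gaussianPDF μ v) (ae_of_all _ fun _ => gaussianPDF_lt_top)]
  simp only [toReal_gaussianPDF]

theorem integral_sub_mul_gaussianReal_eq {μ : ℝ} {v : ℝ≥0} (hv : v ≠ 0) {g g' : ℝ → ℝ} {a : ℝ}
    (hcont : ContinuousAt g a) (hderiv : ∀ x ≠ a, HasDerivAt g (g' x) x)
    (hg : Integrable g (gaussianReal μ v)) (hg' : Integrable g' (gaussianReal μ v))
    (hxg : Integrable (fun x => (x - μ) * g x) (gaussianReal μ v)) :
    ∫ x, (x - μ) * g x ∂gaussianReal μ v = v * ∫ x, g' x ∂gaussianReal μ v := by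
  rw [integrable_gaussianReal_iff hv] at hg hg' hxg
  rw [integral_gaussianReal_eq_integral_smul hv, integral_gaussianReal_eq_integral_smul hv]
  set p := gaussianPDFReal μ v
  have hv' : (v : ℝ) ≠ 0 := by exact_mod_cast hv
  have hFTC := integral_eq_zero_of_hasDerivAt_off_of_integrable (f := fun x => p x • g x)
    (f' := fun x => p x • g' x - (v : ℝ)⁻¹ * p x • ((x - μ) * g x))
    ((hasDerivAt_gaussianPDFReal μ v a).continuousAt.smul hcont)
    (fun x hx => by
      refine ((hasDerivAt_gaussianPDFReal μ v x).mul (hderiv x hx)).congr_deriv ?_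
      simp only [smul_eq_mul, p]
      field_simp
      ring) (hg'.sub (hxg.const_mul _)) hg
  rw [integral_sub hg' (hxg.const_mul _), integral_const_mul, sub_eq_zero] at hFTC
  rw [hFTC]
  field_simp

theorem hasDerivAt_integral_max_mul_sub_zero {α : Type*} [MeasurableSpace α] {μ : Measure α}
    [IsFiniteMeasure μ] {f : α → ℝ} {x K : ℝ} (hf_meas : Measurable f) (hf : Integrable f μ)
    (hK : ∀ᵐ u ∂μ, x * f u ≠ K) :
    HasDerivAt (fun x' => ∫ u, max (x' * f u - K) 0 ∂μ)
      (∫ u, (if 0 < x * f u - K then f u else 0) ∂μ) x := by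
  have hint : ∀ x', Integrable (fun u => max (x' * f u - K) 0) μ := fun x' =>
    ((hf.const_mul x').sub (integrable_const K)).pos_part
  refine (hasDerivAt_integral_of_dominated_loc_of_lip (bound := f) univ_mem
    (Eventually.of_forall fun x' => (hint x').aestronglyMeasurable) (hint x) ?_
    (ae_of_all _ fun u => ?_) hf ?_).2
  · exact (Measurable.ite (measurableSet_lt measurable_const (by fun_prop)) hf_meas
      measurable_const).aestronglyMeasurable
  · refine (LipschitzWith.max_const (.of_dist_le_mul fun a b => ?_) 0).lipschitzOnWith
    rw [Real.coe_nnabs, Real.dist_eq, Real.dist_eq, ← abs_mul]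
    exact le_of_eq (congrArg abs (by ring))
  · filter_upwards [hK] with u hu
    exact ((hasDerivAt_mul_const (f u)).sub_const K).max_zero_of_ne_zero (sub_ne_zero.mpr hu)

theorem exists_forall_ne_mul_exp_sub_ne {x σ : ℝ} (hx : x ≠ 0) (hσ : σ ≠ 0) (c K : ℝ) :
    ∃ a, ∀ u ≠ a, x * exp (σ * u - c) ≠ K :=
  Function.Injective.exists_forall_ne_apply_ne (fun u w h => by simpa [hx, hσ] using h) K

theorem integrable_exp_mul_sub_gaussianReal (μ : ℝ) (v : ℝ≥0) (σ c : ℝ) :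
    Integrable (fun u => exp (σ * u - c)) (gaussianReal μ v) :=
  ((integrable_exp_mul_gaussianReal σ).div_const (exp c)).congr
    (ae_of_all _ fun _ => (exp_sub _ _).symm)

theorem integrable_mul_exp_mul_sub_gaussianReal (μ : ℝ) (v : ℝ≥0) (σ c : ℝ) :
    Integrable (fun u => u * exp (σ * u - c)) (gaussianReal μ v) := by
  have h := integrable_pow_mul_exp_of_mem_interior_integrableExpSet (X := fun u => u)
    (μ := gaussianReal μ v) (v := σ)
    (by simp only [integrableExpSet_fun_id_gaussianReal, interior_univ, mem_univ]) 1
  refine (h.div_const (exp c)).congr (ae_of_all _ fun u => ?_)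
  simp only [pow_one, exp_sub]
  ring

theorem integral_mul_call_gaussianReal {v : ℝ≥0} (hv : v ≠ 0) {σ x : ℝ} (hσ : σ ≠ 0)
    (hx : x ≠ 0) (c K : ℝ) :
    ∫ u, u * max (x * exp (σ * u - c) - K) 0 ∂gaussianReal 0 v =
      v * ∫ u, (if 0 < x * exp (σ * u - c) - K then x * σ * exp (σ * u - c) else 0)
        ∂gaussianReal 0 v := by
  obtain ⟨a, ha⟩ := exists_forall_ne_mul_exp_sub_ne hx hσ c K
  have hE := integrable_exp_mul_sub_gaussianReal 0 v σ c
  have hpayoff : Integrable (fun u => x * exp (σ * u - c) - K) (gaussianReal 0 v) :=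
    (hE.const_mul x).sub (integrable_const K)
  have hid_mul_payoff : Integrable (fun u => u * (x * exp (σ * u - c) - K)) (gaussianReal 0 v) := by
    have hid : Integrable (fun u => u) (gaussianReal 0 v) :=
      (memLp_id_gaussianReal 1).integrable le_rfl
    refine (((integrable_mul_exp_mul_sub_gaussianReal 0 v σ c).const_mul x).sub
      (hid.const_mul K)).congr (ae_of_all _ fun u => ?_)
    simp only [Pi.sub_apply]
    ring
  have habs_max_le : ∀ y : ℝ, |max y 0| ≤ |y| := fun y =>
    (abs_of_nonneg (le_max_right y 0)).trans_le (max_le (le_abs_self y) (abs_nonneg y))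
  have hpayoff_deriv : ∀ u ≠ a, HasDerivAt (fun u => max (x * exp (σ * u - c) - K) 0)
      (if 0 < x * exp (σ * u - c) - K then x * σ * exp (σ * u - c) else 0) u := by
    intro u hu
    have h := ((((hasDerivAt_id u).const_mul σ).sub_const c).exp.const_mul x).sub_const K
    refine (h.max_zero_of_ne_zero (sub_ne_zero.mpr (ha u hu))).congr_deriv ?_
    simp only [id, mul_one]
    split_ifs <;> ring
  simpa using integral_sub_mul_gaussianReal_eq hv (a := a) (by fun_prop) hpayoff_deriv
    hpayoff.pos_part
    ((hE.const_mul (x * σ)).mono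
      (Measurable.ite (measurableSet_lt measurable_const (by fun_prop)) (by fun_prop)
        measurable_const).aestronglyMeasurable
      (ae_of_all _ fun u => by split_ifs <;> simp; positivity))
    (hid_mul_payoff.mono (by fun_prop) (ae_of_all _ fun u => by
      simp only [sub_zero, norm_mul, Real.norm_eq_abs]
      exact mul_le_mul_of_nonneg_left (habs_max_le _) (abs_nonneg u)))

theorem hasDerivAt_integral_call_gaussianReal {v : ℝ≥0} (hv : v ≠ 0) {σ x : ℝ} (hσ : σ ≠ 0)
    (hx : x ≠ 0) (c K : ℝ) :
    HasDerivAt (fun x' => ∫ u, max (x' * exp (σ * u - c) - K) 0 ∂gaussianReal 0 v)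
      (∫ u, max (x * exp (σ * u - c) - K) 0 * (u / (x * σ * v)) ∂gaussianReal 0 v) x := by
  have := nullSingletonClass_gaussianReal (μ := 0) hv
  obtain ⟨a, ha⟩ := exists_forall_ne_mul_exp_sub_ne hx hσ c K
  convert hasDerivAt_integral_max_mul_sub_zero (by fun_prop)
    (integrable_exp_mul_sub_gaussianReal 0 v σ c) ((Measure.ae_ne _ a).mono ha) using 1
  have hv' : (v : ℝ) ≠ 0 := by exact_mod_cast hv
  calc ∫ u, max (x * exp (σ * u - c) - K) 0 * (u / (x * σ * v)) ∂gaussianReal 0 v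
      = (x * σ * v)⁻¹ * ∫ u, u * max (x * exp (σ * u - c) - K) 0 ∂gaussianReal 0 v := by
        rw [← integral_const_mul]
        congr 1 with u
        ring
    _ = (x * σ * v)⁻¹ * (v * (x * σ * ∫ u,
          (if 0 < x * exp (σ * u - c) - K then exp (σ * u - c) else 0) ∂gaussianReal 0 v)) := by
        rw [integral_mul_call_gaussianReal hv hσ hx, ← integral_const_mul (x * σ)]
        simp only [mul_ite, mul_zero]
    _ = ∫ u, (if 0 < x * exp (σ * u - c) - K then exp (σ * u - c) else 0) ∂gaussianReal 0 v := by
        field_simp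

theorem energy_delta_product_call_independent_general
    (T σE σI : ℝ) (hT : 0 < T) (hσE : 0 < σE)
    (KE KI : ℝ) (x y : ℝ) (hx : 0 < x) :
    HasDerivAt
      (fun x' : ℝ =>
        ∫ w : ℝ × ℝ,
          max (x' * Real.exp (σE * w.1 - σE ^ 2 * T / 2) - KE) 0 *
            max (y * Real.exp (σI * w.2 - σI ^ 2 * T / 2) - KI) 0
          ∂((gaussianReal 0 T.toNNReal).prod (gaussianReal 0 T.toNNReal)))
      (∫ w : ℝ × ℝ,
          max (x * Real.exp (σE * w.1 - σE ^ 2 * T / 2) - KE) 0 *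
            max (y * Real.exp (σI * w.2 - σI ^ 2 * T / 2) - KI) 0 *
            (w.1 / (x * σE * T))
        ∂((gaussianReal 0 T.toNNReal).prod (gaussianReal 0 T.toNNReal)))
      x := by
  have hdelta := (hasDerivAt_integral_call_gaussianReal (Real.toNNReal_pos.2 hT).ne' hσE.ne'
    hx.ne' (σE ^ 2 * T / 2) KE).mul_const
      (∫ v, max (y * exp (σI * v - σI ^ 2 * T / 2) - KI) 0 ∂gaussianReal 0 T.toNNReal)
  rw [Real.coe_toNNReal T hT.le] at hdelta
  simp only [← integral_prod_mul] at hdelta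
  exact hdelta.congr_deriv (integral_congr_ae (ae_of_all _ fun w => by ring))

/-- **Energy delta of the product call quanto option (independent model).**
For the payoff `max(Fᴱ(x,u) − K_E, 0) · max(Fᴵ(y,v) − K_I, 0)`, the price is
differentiable in the initial energy price `x > 0`, with derivative given by the
Malliavin weight `u / (x σ_E T)` — even though the call payoff is not differentiable. -/
theorem energy_delta_product_call_independent
    (T σE σI : ℝ) (hT : 0 < T) (hσE : 0 < σE) (hσI : 0 < σI)
    (KE KI : ℝ) (x y : ℝ) (hx : 0 < x) (hy : 0 < y) :
    HasDerivAt
      (fun x' : ℝ =>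
        ∫ w : ℝ × ℝ,
          max (x' * Real.exp (σE * w.1 - σE ^ 2 * T / 2) - KE) 0 *
            max (y * Real.exp (σI * w.2 - σI ^ 2 * T / 2) - KI) 0
          ∂((gaussianReal 0 T.toNNReal).prod (gaussianReal 0 T.toNNReal)))
      (∫ w : ℝ × ℝ,
          max (x * Real.exp (σE * w.1 - σE ^ 2 * T / 2) - KE) 0 *
            max (y * Real.exp (σI * w.2 - σI ^ 2 * T / 2) - KI) 0 *
            (w.1 / (x * σE * T))
        ∂((gaussianReal 0 T.toNNReal).prod (gaussianReal 0 T.toNNReal)))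
      x :=
  energy_delta_product_call_independent_general T σE σI hT hσE KE KI x y hx
end
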